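/- arXiv:1705.07802 — 2 statements merged into one kernel-verified Lean document; each statement's English description precedes it below -/
import Mathlib

section
/- Let Q be a quasi-order and ξ a countable ordinal. For every term T ∈ ⊔Tree^ξ(Q), every function in the class Σ_T is Δ⁰_{1+ξ}-measurable. -/
/-!
Common definitions for formalizing "On the structure of the Wadge degrees of bqo-valued
Borel functions" by Kihara and Montalbán.
-/

open scoped Classical
noncomputable section

namespace WadgeStudy

/-! ### Baire space `ω^ω` -/

/-- Baire space `ω^ω`: the product of countably many copies of discrete `ω`. -/
abbrev Baire : Type := ℕ → ℕ

/-- The basic clopen set `[σ]` of all infinite sequences extending the finite string `σ`. -/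
def cylB (σ : List ℕ) : Set Baire := {X | ∀ i : Fin σ.length, X i = σ.get i}

/-- The finite initial segment `X↾n` of `X ∈ ω^ω`. -/
def initSeg (X : Baire) (n : ℕ) : List ℕ := List.ofFn fun i : Fin n => X i

/-- Concatenation `σ⌢X` of a finite string and an infinite sequence. -/
def appendStr (σ : List ℕ) (X : Baire) : Baire := fun i =>
  if h : i < σ.length then σ.get ⟨i, h⟩ else X (i - σ.length)

/-! ### The Borel hierarchy -/

/-- The Borel hierarchy: `Σ⁰₁` sets are the open sets; for `α > 1`, a set is `Σ⁰_α` if it is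
a countable union of sets each of which is `Π⁰_β` (i.e. has `Σ⁰_β` complement) for some
`β < α`. -/
inductive SigmaZero (X : Type*) [TopologicalSpace X] : Ordinal.{0} → Set X → Prop
  | of_isOpen {s : Set X} : IsOpen s → SigmaZero X 1 s
  | iUnion {α : Ordinal} (hα : 1 < α) (f : ℕ → Set X) (β : ℕ → Ordinal)
      (hβ : ∀ n, β n < α) (hf : ∀ n, SigmaZero X (β n) (f n)ᶜ) :
      SigmaZero X α (⋃ n, f n)

/-- `Π⁰_α` sets are the complements of `Σ⁰_α` sets. -/
def PiZero (X : Type*) [TopologicalSpace X] (α : Ordinal.{0}) (s : Set X) : Prop :=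
  SigmaZero X α sᶜ

/-- `Δ⁰_α = Σ⁰_α ∩ Π⁰_α`. -/
def DeltaZero (X : Type*) [TopologicalSpace X] (α : Ordinal.{0}) (s : Set X) : Prop :=
  SigmaZero X α s ∧ PiZero X α s

/-- A countable ordinal. -/
def IsCountableOrd (ξ : Ordinal.{0}) : Prop := ξ.card ≤ Cardinal.aleph0

/-- `A : X → Q` (with `Q` carrying the discrete topology) is `Δ⁰_ξ`-measurable iff its range is
countable and every fiber is `Δ⁰_ξ`. -/
def DeltaMeasurable {X : Type*} [TopologicalSpace X] {Q : Type*} (ξ : Ordinal.{0}) (A : X → Q) :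
    Prop :=
  (Set.range A).Countable ∧ ∀ q : Q, DeltaZero X ξ (A ⁻¹' {q})

/-- A function into Baire space is `Σ⁰_ξ`-measurable if the preimage of every basic clopen set
is `Σ⁰_ξ`. -/
def SigmaMeasurable {X : Type*} [TopologicalSpace X] (ξ : Ordinal.{0}) (D : X → Baire) : Prop :=
  ∀ σ : List ℕ, SigmaZero X ξ (D ⁻¹' cylB σ)

/-- A `Q`-valued function is Borel if it is `Δ⁰_ξ`-measurable for some countable ordinal `ξ`. -/
def BorelMeasurable {X : Type*} [TopologicalSpace X] {Q : Type*} (A : X → Q) : Prop :=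
  ∃ ξ : Ordinal.{0}, IsCountableOrd ξ ∧ DeltaMeasurable ξ A

/-! ### Wadge reducibility of `Q`-valued functions -/

/-- `Q`-Wadge reducibility: `A ≤_w B` iff there is a continuous `θ` from the domain of `A` to
the domain of `B` with `A X ≤_Q B (θ X)` for all `X`. -/
def WadgeLE {X Y : Type*} [TopologicalSpace X] [TopologicalSpace Y] {Q : Type*} [Preorder Q]
    (A : X → Q) (B : Y → Q) : Prop :=
  ∃ θ : X → Y, Continuous θ ∧ ∀ x, A x ≤ B (θ x)

/-- `Q`-Wadge equivalence. -/
def WadgeEquiv {X Y : Type*} [TopologicalSpace X] [TopologicalSpace Y] {Q : Type*} [Preorder Q]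
    (A : X → Q) (B : Y → Q) : Prop :=
  WadgeLE A B ∧ WadgeLE B A

/-- `A` is self-dual if there is a continuous `θ` with `A (θ X) ≰_Q A X` for all `X`. -/
def SelfDual {Q : Type*} [Preorder Q] (A : Baire → Q) : Prop :=
  ∃ θ : Baire → Baire, Continuous θ ∧ ∀ X, ¬ A (θ X) ≤ A X

/-- The function `A↾[σ] : X ↦ A (σ⌢X)`. -/
def restrictCyl {Q : Type*} (A : Baire → Q) (σ : List ℕ) : Baire → Q :=
  fun X => A (appendStr σ X)

/-- `A` is initializable if `A ≤_w A↾[σ]` for every finite string `σ`. -/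
def Initializable {Q : Type*} [Preorder Q] (A : Baire → Q) : Prop :=
  ∀ σ : List ℕ, WadgeLE A (restrictCyl A σ)

/-- `F(A) = {X : ∀ n, A↾[X↾n] ≡_w A}`. -/
def FSet {Q : Type*} [Preorder Q] (A : Baire → Q) : Set Baire :=
  {X | ∀ n : ℕ, WadgeEquiv (restrictCyl A (initSeg X n)) A}

/-- The countable join `⊕_n A_n`, defined by `(⊕_n A_n)(n⌢X) = A_n X`. -/
def oplus {Q : Type*} (A : ℕ → Baire → Q) : Baire → Q :=
  fun X => A (X 0) fun n => X (n + 1)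

/-- A Borel function `A` is σ-join-reducible if its `Q`-Wadge degree is the least upper bound
of a countable collection of `Q`-Wadge degrees (of Borel functions) each strictly below it. -/
def SigmaJoinReducible {Q : Type*} [Preorder Q] (A : Baire → Q) : Prop :=
  ∃ B : ℕ → Baire → Q,
    (∀ n, BorelMeasurable (B n)) ∧
    (∀ n, WadgeLE (B n) A ∧ ¬ WadgeLE A (B n)) ∧
    ∀ C : Baire → Q, BorelMeasurable C → (∀ n, WadgeLE (B n) C) → WadgeLE A C

/-! ### Better quasi-orders -/

/-- Removing the first entry of a strictly increasing sequence. -/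
def dropMin (X : {X : Baire // StrictMono X}) : {X : Baire // StrictMono X} :=
  ⟨fun n => X.1 (n + 1), fun _ _ h => X.2 (Nat.add_lt_add_right h 1)⟩

/-- A quasi-order `Q` is a better-quasi-order if for every continuous `f : [ω]^ω → Q` (where
`Q` is discrete and `[ω]^ω ⊆ ω^ω` is the subspace of strictly increasing sequences) there is
`X` with `f X ≤_Q f X⁻`. -/
def IsBQO (Q : Type*) [Preorder Q] : Prop :=
  ∀ f : {X : Baire // StrictMono X} → Q,
    @Continuous _ _ _ ⊥ f → ∃ X, f X ≤ f (dropMin X)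

/-! ### Terms: nested labeled trees and forests -/

/-- `L(Q)`-terms: constants `q ∈ Q`, labelings `⟨T⟩^{ω^α}` (with `⟨T⟩ = ⟨T⟩^{ω^0}`),
trees `B → ⊔_i F_i`, and countable disjoint unions `⊔_i F_i`. -/
inductive Term (Q : Type u) : Type (max u 1)
  | const : Q → Term Q
  | jump : Ordinal.{0} → Term Q → Term Q
  | node : Term Q → (ℕ → Term Q) → Term Q
  | sup : (ℕ → Term Q) → Term Q

/-- `⟨⟩`-type (base) terms: constants and labelings. -/
def IsBase {Q : Type u} : Term Q → Prop
  | Term.const _ => True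
  | Term.jump _ _ => True
  | _ => False

/-- A rank function on terms, used to define the quasi-order `⊴` by recursion. -/
def rk {Q : Type u} : Term Q → Ordinal.{0}
  | .const _ => 0
  | .jump _ T => rk T + 1
  | .node B F => max (rk B) (Ordinal.lsub fun i => rk (F i)) + 1
  | .sup F => Ordinal.lsub (fun i => rk (F i)) + 1

theorem ord_lt_add_one (a : Ordinal.{0}) : a < a + 1 := by
  rw [Ordinal.add_one_eq_succ]; exact Order.lt_succ a

theorem rk_lt_jump {Q : Type u} (α : Ordinal.{0}) (T : Term Q) : rk T < rk (.jump α T) :=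
  ord_lt_add_one (rk T)

theorem rk_base_lt_node {Q : Type u} (B : Term Q) (F : ℕ → Term Q) :
    rk B < rk (.node B F) :=
  lt_of_le_of_lt (le_max_left _ _) (ord_lt_add_one _)

theorem rk_child_lt_node {Q : Type u} (B : Term Q) (F : ℕ → Term Q) (i : ℕ) :
    rk (F i) < rk (.node B F) :=
  lt_of_lt_of_le (Ordinal.lt_lsub _ i) (le_trans (le_max_right _ _) (le_of_lt (ord_lt_add_one _)))

theorem rk_child_lt_sup {Q : Type u} (F : ℕ → Term Q) (i : ℕ) :
    rk (F i) < rk (.sup F) :=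
  lt_of_lt_of_le (Ordinal.lt_lsub _ i) (le_of_lt (ord_lt_add_one _))

/-- The quasi-order `⊴` on terms, defined by simultaneous recursion.  A constant `q` is
identified with `⟨q⟩` (so a constant compares with a labeled term by unravelling the label)
and a `⟨⟩`-type term `B` is identified with `B → (empty forest)`, the empty forest being
`⊴`-below everything.  The clauses are:
* `p ⊴ q` iff `p ≤_Q q`;
* `⟨U⟩^{ω^α} ⊴ ⟨V⟩^{ω^β}` iff `U ⊴ V` when `α = β`, iff `⟨U⟩^{ω^α} ⊴ V` when `α > β`, and
  iff `U ⊴ ⟨V⟩^{ω^β}` when `α < β`;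
* for `S = B→⊔_i S_i` and `T = C→⊔_j T_j`: `S ⊴ T` iff either (`B ⊴ C` and `S_i ⊴ T` for
  all `i`), or (`B ⋬ C` and `S ⊴ T_j` for some `j`);
* `⊔` is interpreted as countable supremum: `⊔_i S_i ⊴ ⊔_j T_j` iff every `S_i` is `⊴` some
  `T_j`. -/
def TermLE {Q : Type u} [Preorder Q] : Term Q → Term Q → Prop
  | .const p, .const q => p ≤ q
  | .const p, .jump _ V => TermLE (.const p) V
  | .const p, .node C G =>
      (TermLE (.const p) C) ∨ (¬ TermLE (.const p) C ∧ ∃ j, TermLE (.const p) (G j))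
  | .const p, .sup G => ∃ j, TermLE (.const p) (G j)
  | .jump _ U, .const q => TermLE U (.const q)
  | .jump α U, .jump β V =>
      if α = β then TermLE U V
      else if β < α then TermLE (.jump α U) V
      else TermLE U (.jump β V)
  | .jump α U, .node C G =>
      (TermLE (.jump α U) C) ∨ (¬ TermLE (.jump α U) C ∧ ∃ j, TermLE (.jump α U) (G j))
  | .jump α U, .sup G => ∃ j, TermLE (.jump α U) (G j)
  | .node B F, .const q => TermLE B (.const q) ∧ ∀ i, TermLE (F i) (.const q)
  | .node B F, .jump β V => TermLE B (.jump β V) ∧ ∀ i, TermLE (F i) (.jump β V)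
  | .node B F, .node C G =>
      (TermLE B C ∧ ∀ i, TermLE (F i) (.node C G)) ∨
      (¬ TermLE B C ∧ ∃ j, TermLE (.node B F) (G j))
  | .node B F, .sup G => ∃ j, TermLE (.node B F) (G j)
  | .sup F, .const q => ∀ i, TermLE (F i) (.const q)
  | .sup F, .jump β V => ∀ i, TermLE (F i) (.jump β V)
  | .sup F, .node C G => ∀ i, TermLE (F i) (.node C G)
  | .sup F, .sup G => ∀ i, ∃ j, TermLE (F i) (G j)
termination_by S T => (rk S, rk T)
decreasing_by
  all_goals
    first
      | exact Prod.Lex.left _ _ (rk_lt_jump _ _)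
      | exact Prod.Lex.left _ _ (rk_base_lt_node _ _)
      | exact Prod.Lex.left _ _ (rk_child_lt_node _ _ _)
      | exact Prod.Lex.left _ _ (rk_child_lt_sup _ _)
      | exact Prod.Lex.right _ (rk_lt_jump _ _)
      | exact Prod.Lex.right _ (rk_base_lt_node _ _)
      | exact Prod.Lex.right _ (rk_child_lt_node _ _ _)
      | exact Prod.Lex.right _ (rk_child_lt_sup _ _)

/-- `S ≡ T`: `S ⊴ T` and `T ⊴ S`. -/
def TermEquiv {Q : Type u} [Preorder Q] (S T : Term Q) : Prop := TermLE S T ∧ TermLE T S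

/-- `Tree^n(Q)` for finite `n`: `Tree⁰(Q) = Q` and `Tree^{n+1}(Q) = Tree(Tree^n(Q))`, where
`Tree(Q')` consists of the one point trees `⟨q'⟩` and the trees `⟨q'⟩ → ⊔_i T_i` for
`q' ∈ Q'` and trees `T_i ∈ Tree(Q')`. -/
inductive IsTreeN {Q : Type u} : ℕ → Term Q → Prop
  | const (q : Q) : IsTreeN 0 (.const q)
  | leaf {n : ℕ} {T : Term Q} : IsTreeN n T → IsTreeN (n + 1) (.jump 0 T)
  | node {n : ℕ} {T : Term Q} {F : ℕ → Term Q} :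
      IsTreeN n T → (∀ i, IsTreeN (n + 1) (F i)) → IsTreeN (n + 1) (.node (.jump 0 T) F)

/-- `⊔Tree^n(Q)`: trees in `Tree^n(Q)` and countable disjoint unions of such trees. -/
def IsForestN {Q : Type u} (n : ℕ) (T : Term Q) : Prop :=
  IsTreeN n T ∨ ∃ F : ℕ → Term Q, T = .sup F ∧ ∀ i, IsTreeN n (F i)

/-- The exponent `α` in the normal form `ξ = ω^α + β`, `β < ω^{α+1}`. -/
def olog (ξ : Ordinal.{0}) : Ordinal.{0} := Ordinal.log Ordinal.omega0 ξ

/-- The remainder `β` in the normal form `ξ = ω^α + β`, `β < ω^{α+1}`. -/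
def obeta (ξ : Ordinal.{0}) : Ordinal.{0} := ξ - Ordinal.omega0 ^ olog ξ

/-- `Tree^ξ(Q)` for an ordinal `ξ`: writing `ξ = ω^α + β` with `β < ω^{α+1}`, one has
`Tree^ξ(Q) = Tree^{ω^α}(⟨Tree^β(Q)⟩^{ω^α})` (with `Tree⁰(Q) = Q`), where `Tree^{ω^α}(Q')` is
generated from the constants `q' ∈ Q'` (which are `⟨⟩`-type) by the labelings `⟨T⟩^{ω^γ}` for
`γ < α` (also `⟨⟩`-type) and by `T → ⊔_i F_i` for `⟨⟩`-type `T` and trees `F_i`. -/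
inductive IsTreeXi {Q : Type u} : Ordinal.{0} → Term Q → Prop
  | const {ξ : Ordinal.{0}} (q : Q) (h : obeta ξ = 0) : IsTreeXi ξ (Term.const q)
  | atom {ξ : Ordinal.{0}} {S : Term Q} (h : obeta ξ ≠ 0) (hS : IsTreeXi (obeta ξ) S) :
      IsTreeXi ξ (Term.jump (olog ξ) S)
  | jump {ξ β : Ordinal.{0}} {T : Term Q} (h0 : ξ ≠ 0) (hβ : β < olog ξ) (hT : IsTreeXi ξ T) :
      IsTreeXi ξ (Term.jump β T)
  | node {ξ : Ordinal.{0}} {B : Term Q} {F : ℕ → Term Q} (h0 : ξ ≠ 0) (hB : IsTreeXi ξ B)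
      (hbase : IsBase B) (hF : ∀ i, IsTreeXi ξ (F i)) : IsTreeXi ξ (Term.node B F)

/-- `⊔Tree^ξ(Q)`: trees in `Tree^ξ(Q)` and countable disjoint unions of such trees. -/
def IsForestXi {Q : Type u} (ξ : Ordinal.{0}) (T : Term Q) : Prop :=
  IsTreeXi ξ T ∨ ∃ F : ℕ → Term Q, T = .sup F ∧ ∀ i, IsTreeXi ξ (F i)

/-- The `k`-fold labeling `⟨⟨…⟨T⟩…⟩⟩`. -/
def labelIter {Q : Type u} : ℕ → Term Q → Term Q
  | 0, T => T
  | k + 1, T => .jump 0 (labelIter k T)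

/-- `ι(T) = T[⟨q⟩^k / q]`: replace every occurrence of a constant `q` in `T` by `⟨q⟩^k`. -/
def iotaSubst {Q : Type u} (k : ℕ) : Term Q → Term Q
  | .const q => labelIter k (.const q)
  | .jump α T => .jump α (iotaSubst k T)
  | .node B F => .node (iotaSubst k B) fun i => iotaSubst k (F i)
  | .sup F => .sup fun i => iotaSubst k (F i)

/-! ### The pointclasses `Σ_T` -/

/-- `Σ⁰_ξ`-measurability of a Baire-space valued map on the subspace `D ⊆ ω^ω`. -/
def SigmaMeasurableOn (ξ : Ordinal.{0}) (D : Set Baire) (f : Baire → Baire) : Prop :=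
  ∀ σ : List ℕ, SigmaZero (↥D) ξ ((fun x : ↥D => f x.1) ⁻¹' cylB σ)

/-- The pointclass `Σ_T` of `Q`-valued functions associated to a term `T`, relativized to a
domain `D ⊆ ω^ω` (a function defined on a nonempty closed or open subset of `ω^ω` is
identified with the corresponding total function; `SigmaT T D A` expresses `A↾D ∈ Σ_T`):
* `Σ_q` consists only of the constant function `q`;
* `A ∈ Σ_{⊔_i S_i}` iff there is a partition of the domain into relatively clopen sets `C_i`
  with `A↾C_i ∈ Σ_{S_i}` for all `i`;
* `A ∈ Σ_{T→S}` (`S = ⊔_i F_i`) iff there is a relatively open set `V` with `A↾(D∖V) ∈ Σ_T`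
  and `A↾(D∩V) ∈ Σ_S`;
* `A ∈ Σ_{⟨T⟩^{ω^α}}` iff `A = B ∘ D'` for some `Σ⁰_{1+ω^α}`-measurable `D' : ω^ω → ω^ω` and
  some `B ∈ Σ_T` (for `α = 0` this is the clause for the jump `Σ_{⟨T⟩}`, with a
  `Σ⁰₂`-measurable `D'`). -/
inductive SigmaT {Q : Type u} : Term Q → Set Baire → (Baire → Q) → Prop
  | const (q : Q) (D : Set Baire) (A : Baire → Q) (h : ∀ x ∈ D, A x = q) :
      SigmaT (Term.const q) D A
  | sup (S : ℕ → Term Q) (D : Set Baire) (A : Baire → Q) (C : ℕ → Set Baire)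
      (hcl : ∀ i, IsClopen ((fun x : ↥D => x.1) ⁻¹' C i))
      (hpart : ∀ x ∈ D, ∃! i, x ∈ C i)
      (h : ∀ i, SigmaT (S i) (D ∩ C i) A) :
      SigmaT (Term.sup S) D A
  | node (B : Term Q) (F : ℕ → Term Q) (D : Set Baire) (A : Baire → Q) (V : Set Baire)
      (hV : IsOpen ((fun x : ↥D => x.1) ⁻¹' V))
      (h1 : SigmaT B (D \ V) A)
      (h2 : SigmaT (Term.sup F) (D ∩ V) A) :
      SigmaT (Term.node B F) D A
  | jump (α : Ordinal.{0}) (T : Term Q) (D : Set Baire) (A : Baire → Q)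
      (D' : Baire → Baire) (B : Baire → Q)
      (hD : SigmaMeasurableOn (1 + Ordinal.omega0 ^ α) D D')
      (hB : SigmaT T Set.univ B)
      (hA : ∀ x ∈ D, A x = B (D' x)) :
      SigmaT (Term.jump α T) D A

/-- A total function is in `Σ_T` if it is so on the whole space. -/
def MemSigmaT {Q : Type u} (T : Term Q) (A : Baire → Q) : Prop := SigmaT T Set.univ A

/-- `Ω` is `Σ_T`-complete: `Ω ∈ Σ_T` and every function in `Σ_T` is Wadge reducible to `Ω`. -/
def SigmaTComplete {Q : Type u} [Preorder Q] (T : Term Q) (Ω : Baire → Q) : Prop :=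
  MemSigmaT T Ω ∧ ∀ A : Baire → Q, MemSigmaT T A → WadgeLE A Ω

/-! ### `ω̂ = ω ∪ {pass}`, conciliatory functions -/

/-- `ω̂ = ω ∪ {pass}`; `none` plays the role of the symbol `pass`. -/
abbrev Hat : Type := Option ℕ

instance : TopologicalSpace Hat := ⊥
instance : DiscreteTopology Hat := ⟨rfl⟩
instance : TopologicalSpace (Option Hat) := ⊥
instance : DiscreteTopology (Option Hat) := ⟨rfl⟩

/-- `ω̂^ω`, with the product topology of the discrete space `ω̂`. -/
abbrev HatBaire : Type := ℕ → Hat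

/-- Basic clopen subsets of `ω̂^ω`. -/
def cylH (σ : List Hat) : Set HatBaire := {X | ∀ i : Fin σ.length, X i = σ.get i}

/-- The index of the `k`-th non-`pass` entry of `X ∈ ω̂^ω`, if it exists. -/
def nthSome (X : HatBaire) : ℕ → Option ℕ
  | 0 => if h : ∃ i, (X i).isSome then some (Nat.find h) else none
  | k + 1 =>
    match nthSome X k with
    | none => none
    | some i => if h : ∃ j, i < j ∧ (X j).isSome then some (Nat.find h) else none

theorem nthSome_isSome (X : HatBaire) : ∀ k i, nthSome X k = some i → (X i).isSome := by
  intro k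
  induction k with
  | zero =>
    intro i h
    simp only [nthSome] at h
    split at h
    · rename_i hex
      cases h
      exact Nat.find_spec hex
    · exact absurd h (by simp)
  | succ k ih =>
    intro i h
    simp only [nthSome] at h
    split at h
    · exact absurd h (by simp)
    · rename_i j hj
      split at h
      · rename_i hex
        cases h
        exact (Nat.find_spec hex).2
      · exact absurd h (by simp)

theorem nthSome_succ_none {X : HatBaire} {k : ℕ} (h : nthSome X k = none) :
    nthSome X (k + 1) = none := by
  simp only [nthSome, h]

/-- `X^p ∈ ω^{≤ω}`: the finite or infinite sequence obtained from `X ∈ ω̂^ω` by deleting all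
occurrences of `pass`. -/
def strip (X : HatBaire) : Stream'.Seq ℕ :=
  ⟨fun k => (nthSome X k).bind fun i => X i, by
    intro n h
    have hn : nthSome X n = none := by
      cases hh : nthSome X n with
      | none => rfl
      | some i =>
        exfalso
        have h1 := nthSome_isSome X n i hh
        replace h : (nthSome X n).bind (fun i => X i) = none := h
        rw [hh, Option.bind_some] at h
        rw [h] at h1
        simp at h1
    show (nthSome X (n + 1)).bind _ = none
    rw [nthSome_succ_none hn, Option.bind_none]⟩

/-- The natural inclusion `ω^ω ⊆ ω^{≤ω}`. -/
def ofBaire (X : Baire) : Stream'.Seq ℕ :=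
  ⟨fun n => some (X n), by intro n h; simp at h⟩

/-- The natural inclusion `ω^{<ω} ⊆ ω^{≤ω}`. -/
def ofList (σ : List ℕ) : Stream'.Seq ℕ := Stream'.Seq.ofList σ

/-- The initial segment (prefix) relation on `ω^{≤ω}`. -/
def SeqPrefix (σ τ : Stream'.Seq ℕ) : Prop :=
  ∀ n a, σ.get? n = some a → τ.get? n = some a

/-- A `Q`-valued function on `ω̂^ω` is conciliatory if its value depends only on the
pass-deleted input: `X^p = Y^p → A(X) = A(Y)`. -/
def ConciliatoryQ {Q : Type*} (A : HatBaire → Q) : Prop :=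
  ∀ X Y, strip X = strip Y → A X = A Y

/-- `Ψ : ω̂^ω → ω̂^ω` is conciliatory if `X^p = Y^p` implies `Ψ(X)^p = Ψ(Y)^p`. -/
def ConciliatoryF (Ψ : HatBaire → HatBaire) : Prop :=
  ∀ X Y, strip X = strip Y → strip (Ψ X) = strip (Ψ Y)

/-- `Ψ ≡_p Φ`: `Ψ(X)^p = Φ(X)^p` for all `X`. -/
def PEquiv (Ψ Φ : HatBaire → HatBaire) : Prop := ∀ X, strip (Ψ X) = strip (Φ X)

/-- `Σ⁰_ξ`-measurability for self-maps of `ω̂^ω`. -/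
def SigmaMeasurableH (ξ : Ordinal.{0}) (Ψ : HatBaire → HatBaire) : Prop :=
  ∀ σ : List Hat, SigmaZero HatBaire ξ (Ψ ⁻¹' cylH σ)

/-- A conciliatory `U` is `Σ⁰_ξ`-universal if it is `Σ⁰_ξ`-measurable and every
`Σ⁰_ξ`-measurable conciliatory `G` satisfies `G ≡_p U ∘ θ` for some continuous `θ`. -/
def SigmaUniversal (ξ : Ordinal.{0}) (U : HatBaire → HatBaire) : Prop :=
  SigmaMeasurableH ξ U ∧
    ∀ G : HatBaire → HatBaire, ConciliatoryF G → SigmaMeasurableH ξ G →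
      ∃ θ : HatBaire → HatBaire, Continuous θ ∧ PEquiv G (U ∘ θ)

/-- `Ψ` is initializable if for every `τ ∈ ω̂^{<ω}` there is a continuous `θ_τ : ω̂^ω → [τ]`
with `Ψ ≡_p Ψ ∘ θ_τ`. -/
def InitializableH (Ψ : HatBaire → HatBaire) : Prop :=
  ∀ τ : List Hat, ∃ θ : HatBaire → HatBaire,
    Continuous θ ∧ (∀ X, θ X ∈ cylH τ) ∧ PEquiv Ψ (Ψ ∘ θ)

/-! ### The mind-change coding -/

/-- `ω̂^{≤ω}`: finite or infinite sequences over `ω̂` (the value `none` of the outer `Option`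
means "beyond the length of the sequence"). -/
abbrev HatSeq : Type := {Y : ℕ → Option Hat // ∀ n, Y n = none → Y (n + 1) = none}

/-- The pass-deleted sequence `Y^p ∈ ω^{≤ω}` of `Y ∈ ω̂^{≤ω}`. -/
def stripHS (Y : HatSeq) : Stream'.Seq ℕ := strip fun n => (Y.1 n).join

/-- The mind-change coding `Y → Z` for `Y ∈ ω̂^{≤ω}` of length `ℓ` and `Z ∈ ω̂^ω`:
`(Y→Z)(n) = 2·Y(n)` if `n < ℓ` and `Y(n) ≠ pass`; `pass` if `n < ℓ` and `Y(n) = pass`;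
`2·Z(0)+1` if `n = ℓ`; and `Z(n−ℓ)` if `n > ℓ`.  When `Y` is infinite or `Z^p` is empty,
`Y→Z` is `Y` with each non-pass entry doubled (padded with passes). -/
def arrowSeq (Y : HatSeq) (Z : HatBaire) : HatBaire := fun n =>
  match Y.1 n with
  | some (some k) => some (2 * k)
  | some none => none
  | none =>
    if ∀ m, Z m = none then none
    else if n = sInf {m | Y.1 m = none} then (Z 0).map fun z => 2 * z + 1
    else Z (n - sInf {m | Y.1 m = none})

/-- The canonical `π₀`: the part of `X` before the first mind change, with all entries halved
(and passes from the first mind change on). -/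
def pi0 (X : HatBaire) : HatBaire := fun n =>
  if ∃ m ≤ n, ∃ k, X m = some (2 * k + 1) then none
  else (X n).map fun k => k / 2

/-- The canonical `π₁`: the decoded part of `X` from the first mind change on (and all passes
if no mind change ever occurs). -/
def pi1 (X : HatBaire) : HatBaire := fun n =>
  if ∃ m, ∃ k, X m = some (2 * k + 1) then
    if n = 0 then (X (sInf {m | ∃ k, X m = some (2 * k + 1)})).map fun k => k / 2
    else X (sInf {m | ∃ k, X m = some (2 * k + 1)} + n)
  else none

/-- The mind-change operation on functions:
`(A→B)(X) = A(π₀ X)` if `π₁(X)^p` is empty, and `B(π₁ X)` otherwise. -/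
def mcArrow {Q : Type*} (A B : HatBaire → Q) : HatBaire → Q := fun X =>
  if ∀ n, pi1 X n = none then A (pi0 X) else B (pi1 X)

/-- The `Σ_T`-complete functions `Ω_T`, relative to a fixed `Σ⁰₂`-universal initializable
conciliatory function `𝒰`:
* `Ω_{⟨q⟩}` is the constant function with value `q` (equivalently `Ω_q ∘ 𝒰`);
* `Ω_{⟨S⟩} = Ω_S ∘ 𝒰`;
* `Ω_{⟨S⟩→F} = Ω_{⟨S⟩} → Ω_F`: the value is `Ω_{⟨S⟩}(π₀ X)` if no mind change occurs in `X`,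
  and `Ω_F(π₁ X)` otherwise (where `Ω_F(n⌢X') = Ω_{F_n}(X')`);
* `Ω_{⊔_n T_n}(n⌢X) = Ω_{T_n}(X)`. -/
def Omega {Q : Type u} (U : HatBaire → HatBaire) : Term Q → HatBaire → Q
  | .const q => fun _ => q
  | .jump _ T => fun X => Omega U T (U X)
  | .node B F => fun X =>
      if ∀ n, pi1 X n = none then Omega U B (pi0 X)
      else Omega U (F ((pi1 X 0).getD 0)) fun n => pi1 X (n + 1)
  | .sup F => fun X => Omega U (F ((X 0).getD 0)) fun n => X (n + 1)

/-- `Ω_T` as a function on `ω × ω̂^ω`: for a `⊔`-type term `⊔_n T_n` this is the function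
`(n, X) ↦ Ω_{T_n}(X)`; a tree is treated as a forest with a single (repeated) component,
i.e. `Ω_T` is composed with the (Wadge-irrelevant) projection. -/
def OmegaC {Q : Type u} (U : HatBaire → HatBaire) (T : Term Q) : ℕ × HatBaire → Q :=
  match T with
  | .sup F => fun p => Omega U (F p.1) p.2
  | t => fun p => Omega U t p.2

/-!
Induction on the derivation of `A ∈ Σ_T`.  Constant functions have clopen fibres.  Gluing along
a relatively clopen partition, or along an open set `V` and its closed complement, preserves
`Δ⁰_{1+ξ}`-measurability; the closed piece needs level `1 + ξ ≥ 2`, which holds because a tree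
with a branching node lives at a level `ξ ≥ 1`.  A labeling `⟨T⟩^{ω^α}` composes a
`Σ⁰_{1+ω^α}`-measurable map with a `Δ⁰_{1+ζ}`-measurable function, which lands at level
`1 + ω^α + ζ`, and the normal form of `ξ` makes `ω^α + ζ = ξ`.
-/

open Set Topology

theorem exists_isClosed_iUnion_eq {X : Type*} [TopologicalSpace X] [PerfectlyNormalSpace X]
    {U : Set X} (hU : IsOpen U) : ∃ F : ℕ → Set X, (∀ n, IsClosed (F n)) ∧ ⋃ n, F n = U := by
  obtain ⟨G, hG, hUG⟩ := isGδ_iff_eq_iInter_nat.1 hU.isClosed_compl.isGδ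
  exact ⟨fun n => (G n)ᶜ, fun n => (hG n).isClosed_compl, by
    rw [← compl_iInter, ← hUG, compl_compl]⟩

namespace SigmaZero

variable {X Y : Type*} [TopologicalSpace X] [TopologicalSpace Y] {α β : Ordinal.{0}}
  {s t : Set X}

theorem one_le (h : SigmaZero X α s) : 1 ≤ α := by
  cases h with
  | of_isOpen _ => exact le_rfl
  | iUnion hα _ _ _ _ => exact hα.le

theorem isOpen (h : SigmaZero X 1 s) : IsOpen s := by
  cases h with
  | of_isOpen h => exact h
  | iUnion hα _ _ _ _ => exact absurd hα (lt_irrefl 1)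

theorem exists_eq_iUnion (h : SigmaZero X α s) (hα : 1 < α) :
    ∃ (f : ℕ → Set X) (β : ℕ → Ordinal.{0}), (∀ n, β n < α) ∧
      (∀ n, SigmaZero X (β n) (f n)ᶜ) ∧ s = ⋃ n, f n := by
  cases h with
  | of_isOpen _ => exact absurd hα (lt_irrefl 1)
  | iUnion _ f β hβ hf => exact ⟨f, β, hβ, hf, rfl⟩

theorem of_compl (h : SigmaZero X β sᶜ) (hβα : β < α) : SigmaZero X α s := by
  rw [← iUnion_const (ι := ℕ) s]
  exact iUnion (h.one_le.trans_lt hβα) _ (fun _ => β) (fun _ => hβα) fun _ => h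

theorem of_isClopen (hs : IsClopen s) (hα : 1 ≤ α) : SigmaZero X α s := by
  rcases hα.eq_or_lt with rfl | hα
  · exact of_isOpen hs.isOpen
  · exact of_compl (of_isOpen hs.isClosed.isOpen_compl) hα

theorem iUnion_of_countable {ι : Sort*} [Countable ι] {f : ι → Set X} (hα : 1 ≤ α)
    (h : ∀ i, SigmaZero X α (f i)) : SigmaZero X α (⋃ i, f i) := by
  rcases isEmpty_or_nonempty ι with hι | hι
  · rw [iUnion_of_empty]
    exact of_isClopen isClopen_empty hα
  obtain ⟨e, he⟩ := exists_surjective_nat ι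
  rw [← he.iUnion_comp]
  rcases hα.eq_or_lt with rfl | hα
  · exact of_isOpen (isOpen_iUnion fun n => (h (e n)).isOpen)
  choose g β hβ hg hfg using fun n => (h (e n)).exists_eq_iUnion hα
  rw [iUnion_congr hfg, ← iUnion_unpair]
  exact iUnion hα _ _ (fun _ => hβ _ _) fun _ => hg _ _

theorem union (hs : SigmaZero X α s) (ht : SigmaZero X α t) : SigmaZero X α (s ∪ t) := by
  rw [union_eq_iUnion]
  exact iUnion_of_countable hs.one_le (Bool.forall_bool.2 ⟨ht, hs⟩)

theorem preimage {f : Y → X} (hf : Continuous f) (h : SigmaZero X α s) :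
    SigmaZero Y α (f ⁻¹' s) := by
  induction h with
  | of_isOpen h => exact of_isOpen (h.preimage hf)
  | iUnion hα g β hβ _ ih =>
    rw [preimage_iUnion]
    exact iUnion hα _ β hβ ih

theorem exists_preimage_eq {e : Y → X} (he : IsInducing e) {s : Set Y} (h : SigmaZero Y α s) :
    ∃ t, SigmaZero X α t ∧ e ⁻¹' t = s := by
  induction h with
  | of_isOpen h =>
    obtain ⟨t, ht, rfl⟩ := he.isOpen_iff.1 h
    exact ⟨t, of_isOpen ht, rfl⟩
  | iUnion hα f β hβ _ ih =>
    choose t ht hte using ih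
    refine ⟨⋃ n, (t n)ᶜ, iUnion hα _ β hβ fun n => by rw [compl_compl]; exact ht n, ?_⟩
    simp only [preimage_iUnion, preimage_compl, hte, compl_compl]

theorem mono [PerfectlyNormalSpace X] (h : SigmaZero X α s) (hαβ : α ≤ β) :
    SigmaZero X β s := by
  rcases hαβ.eq_or_lt with rfl | hlt
  · exact h
  cases h with
  | of_isOpen hs =>
    obtain ⟨F, hF, rfl⟩ := exists_isClosed_iUnion_eq hs
    exact iUnion hlt F (fun _ => 1) (fun _ => hlt) fun n => of_isOpen (hF n).isOpen_compl
  | iUnion hα f γ hγ hf => exact iUnion (hα.trans hlt) f γ (fun n => (hγ n).trans hlt) hf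

theorem inter_isClosed [PerfectlyNormalSpace X] (h : SigmaZero X α s) (ht : IsClosed t)
    (hα : 1 < α) : SigmaZero X α (s ∩ t) := by
  obtain ⟨f, β, hβ, hf, rfl⟩ := h.exists_eq_iUnion hα
  rw [iUnion_inter]
  refine iUnion hα _ β hβ fun n => ?_
  rw [compl_inter]
  exact (hf n).union ((of_isOpen ht.isOpen_compl).mono (hf n).one_le)

theorem inter_isOpen [PerfectlyNormalSpace X] (h : SigmaZero X α s) (ht : IsOpen t) :
    SigmaZero X α (s ∩ t) := by
  rcases h.one_le.eq_or_lt with rfl | hα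
  · exact of_isOpen (h.isOpen.inter ht)
  obtain ⟨F, hF, rfl⟩ := exists_isClosed_iUnion_eq ht
  rw [inter_iUnion]
  exact iUnion_of_countable hα.le fun n => h.inter_isClosed (hF n) hα

theorem image_of_isOpenEmbedding [PerfectlyNormalSpace X] {e : Y → X} (he : IsOpenEmbedding e)
    {s : Set Y} (h : SigmaZero Y α s) : SigmaZero X α (e '' s) := by
  obtain ⟨t, ht, rfl⟩ := h.exists_preimage_eq he.isInducing
  rw [image_preimage_eq_inter_range]
  exact ht.inter_isOpen he.isOpen_range

theorem image_of_isClosedEmbedding [PerfectlyNormalSpace X] {e : Y → X}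
    (he : IsClosedEmbedding e) {s : Set Y} (h : SigmaZero Y α s) (hα : 1 < α) :
    SigmaZero X α (e '' s) := by
  obtain ⟨t, ht, rfl⟩ := h.exists_preimage_eq he.isInducing
  rw [image_preimage_eq_inter_range]
  exact ht.inter_isClosed he.isClosed_range hα

end SigmaZero

theorem cylB_initSeg (x : Baire) (n : ℕ) : cylB (initSeg x n) = PiNat.cylinder x n := by
  ext y
  simp [cylB, initSeg, PiNat.cylinder, Fin.forall_iff]

section SigmaMeasurable

variable {X : Type*} [TopologicalSpace X] {g : X → Baire} {δ η : Ordinal.{0}}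

theorem SigmaMeasurable.sigmaZero_preimage_of_isOpen (hg : SigmaMeasurable (1 + δ) g)
    {U : Set Baire} (hU : IsOpen U) : SigmaZero X (1 + δ) (g ⁻¹' U) := by
  have hU_eq : U = ⋃ σ : {σ : List ℕ // cylB σ ⊆ U}, cylB σ.1 := by
    refine Subset.antisymm (fun x hx => ?_) (iUnion_subset fun σ => σ.2)
    obtain ⟨_, ⟨y, n, rfl⟩, hxy, hyU⟩ :=
      (PiNat.isTopologicalBasis_cylinders _).exists_subset_of_mem_open hx hU
    rw [← cylB_initSeg] at hxy hyU
    exact mem_iUnion.2 ⟨⟨_, hyU⟩, hxy⟩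
  rw [hU_eq, preimage_iUnion]
  exact SigmaZero.iUnion_of_countable le_self_add fun σ => hg σ.1

theorem SigmaZero.preimage_of_sigmaMeasurable (hg : SigmaMeasurable (1 + δ) g) {s : Set Baire}
    (hs : SigmaZero Baire (1 + η) s) : SigmaZero X (1 + δ + η) (g ⁻¹' s) := by
  generalize hγ : 1 + η = γ at hs
  induction hs generalizing η with
  | of_isOpen hU =>
    obtain rfl : η = 0 := by simpa using hγ
    simpa using hg.sigmaZero_preimage_of_isOpen hU
  | iUnion hα f β hβ hf ih =>
    subst hγ
    have hβ_eq : ∀ n, 1 + (β n - 1) = β n := fun n =>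
      Ordinal.add_sub_cancel_of_le (hf n).one_le
    rw [preimage_iUnion]
    refine iUnion ?_ _ (fun n => 1 + δ + (β n - 1)) (fun n => ?_) fun n => ih n (hβ_eq n)
    · exact hα.trans_le (by gcongr; exact le_self_add)
    · rw [add_lt_add_iff_left, ← add_lt_add_iff_left 1, hβ_eq]
      exact hβ n

end SigmaMeasurable

namespace DeltaMeasurable

variable {X Y : Type*} [TopologicalSpace X] [TopologicalSpace Y] {Q : Type*} {A : X → Q}
  {α : Ordinal.{0}}

theorem const (q : Q) (hα : 1 ≤ α) : DeltaMeasurable α (fun _ : X => q) := by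
  refine ⟨(countable_singleton q).mono range_const_subset, fun p => ?_⟩
  have hp : IsClopen ((fun _ : X => q) ⁻¹' {p}) := by
    rw [preimage_const]
    split_ifs
    exacts [isClopen_univ, isClopen_empty]
  exact ⟨.of_isClopen hp hα, .of_isClopen hp.compl hα⟩

theorem comp_continuous (hA : DeltaMeasurable α A) {f : Y → X} (hf : Continuous f) :
    DeltaMeasurable α (A ∘ f) :=
  ⟨hA.1.mono (range_comp_subset_range f A),
    fun q => ⟨(hA.2 q).1.preimage (f := f) hf, (hA.2 q).2.preimage (f := f) hf⟩⟩

theorem comp_sigmaMeasurable {δ η : Ordinal.{0}} {B : Baire → Q}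
    (hB : DeltaMeasurable (1 + η) B) {g : X → Baire} (hg : SigmaMeasurable (1 + δ) g) :
    DeltaMeasurable (1 + δ + η) (B ∘ g) :=
  ⟨hB.1.mono (range_comp_subset_range g B), fun q =>
    ⟨(hB.2 q).1.preimage_of_sigmaMeasurable hg, (hB.2 q).2.preimage_of_sigmaMeasurable hg⟩⟩

theorem of_iUnion_range [PerfectlyNormalSpace X] {ι : Type*} [Countable ι] {Y : ι → Type*}
    [∀ i, TopologicalSpace (Y i)] {e : ∀ i, Y i → X} (he : ∀ i, IsOpenEmbedding (e i))
    (hcov : ⋃ i, range (e i) = univ) (hα : 1 ≤ α) (h : ∀ i, DeltaMeasurable α (A ∘ e i)) :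
    DeltaMeasurable α A := by
  have hpre : ∀ R : Set Q, (∀ i, SigmaZero (Y i) α ((A ∘ e i) ⁻¹' R)) →
      SigmaZero X α (A ⁻¹' R) := fun R hR => by
    rw [← inter_univ (A ⁻¹' R), ← hcov, inter_iUnion]
    simp_rw [← image_preimage_eq_inter_range]
    exact .iUnion_of_countable hα fun i => (hR i).image_of_isOpenEmbedding (he i)
  -- the `Π⁰_α` half of `Δ⁰_α` is the `Σ⁰_α` statement for the preimage of `{q}ᶜ`
  refine ⟨?_, fun q => ⟨hpre _ fun i => ((h i).2 q).1, hpre {q}ᶜ fun i => ((h i).2 q).2⟩⟩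
  rw [← image_univ, ← hcov, image_iUnion]
  simp_rw [← range_comp]
  exact countable_iUnion fun i => (h i).1

theorem of_union_range [PerfectlyNormalSpace X] {Y₁ Y₂ : Type*} [TopologicalSpace Y₁]
    [TopologicalSpace Y₂] {e₁ : Y₁ → X} {e₂ : Y₂ → X} (he₁ : IsClosedEmbedding e₁)
    (he₂ : IsOpenEmbedding e₂) (hcov : range e₁ ∪ range e₂ = univ) (hα : 1 < α)
    (h₁ : DeltaMeasurable α (A ∘ e₁)) (h₂ : DeltaMeasurable α (A ∘ e₂)) :
    DeltaMeasurable α A := by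
  have hpre : ∀ R : Set Q, SigmaZero Y₁ α ((A ∘ e₁) ⁻¹' R) → SigmaZero Y₂ α ((A ∘ e₂) ⁻¹' R) →
      SigmaZero X α (A ⁻¹' R) := fun R hR₁ hR₂ => by
    rw [← inter_univ (A ⁻¹' R), ← hcov, inter_union_distrib_left,
      ← image_preimage_eq_inter_range, ← image_preimage_eq_inter_range]
    exact (hR₁.image_of_isClosedEmbedding he₁ hα).union (hR₂.image_of_isOpenEmbedding he₂)
  refine ⟨?_, fun q => ⟨hpre _ (h₁.2 q).1 (h₂.2 q).1, hpre {q}ᶜ (h₁.2 q).2 (h₂.2 q).2⟩⟩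
  rw [← image_univ, ← hcov, image_union, ← range_comp, ← range_comp]
  exact h₁.1.union h₂.1

end DeltaMeasurable

section Terms

variable {Q : Type u} {ξ : Ordinal.{0}}

theorem isForestXi_sup_iff {F : ℕ → Term Q} : IsForestXi ξ (.sup F) ↔ ∀ i, IsTreeXi ξ (F i) :=
  ⟨fun h => h.elim (fun h => by cases h) fun ⟨_, hG, hF⟩ => by cases hG; exact hF,
    fun h => Or.inr ⟨F, rfl, h⟩⟩

theorem IsForestXi.isTreeXi {T : Term Q} (h : IsForestXi ξ T) (hT : ∀ F, T ≠ .sup F) :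
    IsTreeXi ξ T :=
  h.resolve_right fun ⟨F, hF, _⟩ => hT F hF

theorem IsTreeXi.exists_of_jump {α : Ordinal.{0}} {T : Term Q} (h : IsTreeXi ξ (.jump α T)) :
    ∃ ζ, IsTreeXi ζ T ∧ Ordinal.omega0 ^ α + ζ = ξ := by
  cases h with
  | atom hβ hT =>
    have hξ : ξ ≠ 0 := by
      rintro rfl
      simp [obeta] at hβ
    exact ⟨_, hT, Ordinal.add_sub_cancel_of_le (Ordinal.opow_log_le_self _ hξ)⟩
  | jump hξ hα hT =>
    refine ⟨ξ, hT, Ordinal.add_of_omega0_opow_le ?_ (Ordinal.opow_log_le_self _ hξ)⟩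
    exact (Ordinal.opow_lt_opow_iff_right Ordinal.one_lt_omega0).2 hα

end Terms

theorem SigmaT.deltaMeasurable_domRestrict {Q : Type u} {T : Term Q} {D : Set Baire}
    {A : Baire → Q} (h : SigmaT T D A) {ξ : Ordinal.{0}} (hT : IsForestXi ξ T) :
    DeltaMeasurable (1 + ξ) (D.domRestrict A) := by
  induction h generalizing ξ with
  | const q D A hA =>
    rw [show D.domRestrict A = fun _ => q from funext fun x => hA x x.2]
    exact .const q le_self_add
  | sup S D A C hC hpart _ ih =>
    refine .of_iUnion_range (e := fun i => inclusion (inter_subset_left : D ∩ C i ⊆ D))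
      (fun i => .inclusion _ ?_) ?_ le_self_add fun i => ih i (.inl (isForestXi_sup_iff.1 hT i))
    · simpa using (hC i).isOpen
    · refine eq_univ_of_forall fun x => ?_
      obtain ⟨i, hi, -⟩ := hpart x x.2
      simpa [range_inclusion] using ⟨i, hi⟩
  | node B F D A V hV _ _ ih₁ ih₂ =>
    cases hT.isTreeXi (by simp) with | node hξ hB _ hF => ?_
    refine .of_union_range (.inclusion sdiff_subset ?_) (.inclusion inter_subset_left ?_) ?_
      ?_ (ih₁ (.inl hB)) (ih₂ (isForestXi_sup_iff.2 hF))
    · simpa [← compl_eq_univ_sdiff] using hV.isClosed_compl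
    · simpa using hV
    · refine eq_univ_of_forall fun x => ?_
      simp [range_inclusion, em']
    · exact lt_add_of_pos_right 1 (pos_iff_ne_zero.2 hξ)
  | jump α T D A D' B hD _ hA ih =>
    obtain ⟨ζ, hζ, rfl⟩ := (hT.isTreeXi (by simp)).exists_of_jump
    have hB : DeltaMeasurable (1 + ζ) B :=
      (ih (.inl hζ)).comp_continuous (Homeomorph.Set.univ Baire).symm.continuous
    rw [show D.domRestrict A = B ∘ D.domRestrict D' from funext fun x => hA x x.2, ← add_assoc]
    exact hB.comp_sigmaMeasurable hD

theorem sigmaT_functions_are_delta_measurable_general (Q : Type u) (ξ : Ordinal.{0})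
    (T : Term Q) (hT : IsForestXi ξ T) (A : Baire → Q)
    (hA : MemSigmaT T A) :
    DeltaMeasurable (1 + ξ) A :=
  (SigmaT.deltaMeasurable_domRestrict hA hT).comp_continuous
    (Homeomorph.Set.univ Baire).symm.continuous

/-- Let `Q` be a quasi-order and `ξ` a countable ordinal.  For every term
`T ∈ ⊔Tree^ξ(Q)`, every function in the class `Σ_T` is `Δ⁰_{1+ξ}`-measurable. -/
theorem sigmaT_functions_are_delta_measurable (Q : Type u) [Preorder Q] (ξ : Ordinal.{0})
    (hξ : IsCountableOrd ξ) (T : Term Q) (hT : IsForestXi ξ T) (A : Baire → Q)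
    (hA : MemSigmaT T A) :
    DeltaMeasurable (1 + ξ) A :=
  sigmaT_functions_are_delta_measurable_general Q ξ T hT A hA

end WadgeStudy
end
end

section
/- A function G: ω^{≤ω} → ω^{≤ω} can be represented as a continuous conciliatory function (i.e., there exists a continuous conciliatory Ĝ: ω̂^ω → ω̂^ω with Ĝ(X)^p = G(X^p) for all X ∈ ω̂^ω) if and only if both: (i) σ ⊆ τ implies G(σ) ⊆ G(τ) for all σ, τ ∈ ω^{<ω}, and (ii) G(X) = ⋃_n G(X↾n) for every X ∈ ω^ω. -/
/-!
Common definitions for formalizing "On the structure of the Wadge degrees of bqo-valued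
Borel functions" by Kihara and Montalbán.
-/

open scoped Classical
noncomputable section

/-!
If `Ĝ` is continuous with `Ĝ(X)^p = G(X^p)`, then `{Y | G(Y^p)(k) = a}` is open, since the `k`-th
entry of `Z^p` is determined by a finite initial segment of `Z`. Such an open condition, holding
at `σ` followed by passes, persists when the input continues after a long block of passes with
the rest of `τ`; this gives (i). Holding at `X`, it persists when `X` is replaced by passes
after a long initial segment; holding at `X↾n` followed by passes, it persists when the input
continues after a long block of passes with the rest of `X`. These give the two inclusions
of (ii).

Conversely, given (i) and (ii), let `Ĝ(X)` at stage `n` emit the next entry of `G((X↾(n+1))^p)`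
if that entry is already present, and pass otherwise. Each output depends on finitely many
inputs, so `Ĝ` is continuous. By (i) the approximations `G((X↾n)^p)` form a chain, and its union
is `G(X^p)`: by (ii) when `X^p` is infinite, and by (i) alone when `X^p` is finite, because then
`(X↾n)^p = X^p` for large `n`. Every entry of the union is eventually emitted, so
`Ĝ(X)^p = G(X^p)`, and this makes `Ĝ` conciliatory.
-/

open PiNat

theorem Nat.dite_find_eq_map_succ {p : ℕ → Prop} [DecidablePred p] (h0 : ¬ p 0) :
    (if h : ∃ j, p j then some (Nat.find h) else none) =
      (if h : ∃ j, p (j + 1) then some (Nat.find h) else none).map Nat.succ := by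
  by_cases h : ∃ j, p (j + 1)
  · have h' : ∃ j, p j := ⟨_, h.choose_spec⟩
    rw [dif_pos h', dif_pos h, Option.map_some, Nat.find_comp_succ h' h h0]
  · have h' : ¬ ∃ j, p j := by
      rintro ⟨_ | j, hj⟩
      exacts [h0 hj, h ⟨j, hj⟩]
    rw [dif_neg h', dif_neg h, Option.map_none]

theorem Stream'.Seq.get?_append_ofList {α : Type*} {l : List α} {s : Stream'.Seq α} {k : ℕ}
    (hk : k < l.length) : ((l : Stream'.Seq α).append s).get? k = l[k]? := by
  induction l generalizing k with
  | nil => simp at hk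
  | cons x l ih =>
    rw [Stream'.Seq.ofList_cons, Stream'.Seq.cons_append]
    cases k with
    | zero => rfl
    | succ k => exact (Stream'.Seq.get?_cons_succ _ _ _).trans (ih (by simpa using hk))

theorem List.IsPrefix.getElem?_eq_some {α : Type*} {l l' : List α} {k : ℕ} {a : α}
    (h : l <+: l') (hk : l[k]? = some a) : l'[k]? = some a := by
  obtain ⟨r, rfl⟩ := h
  rwa [List.getElem?_append_left (List.getElem?_eq_some_iff.1 hk).1]

theorem List.exists_forall_prefix_of_length_le {α : Type*} {l : ℕ → List α}
    (hl : ∀ {m n}, m ≤ n → l m <+: l n) {B : ℕ} (hB : ∀ n, (l n).length ≤ B) :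
    ∃ n₀, ∀ n, l n <+: l n₀ := by
  have hbdd : BddAbove (Set.range fun n => (l n).length) :=
    ⟨B, by rintro _ ⟨n, rfl⟩; exact hB n⟩
  obtain ⟨n₀, hn₀⟩ := Nat.sSup_mem (Set.range_nonempty _) hbdd
  refine ⟨n₀, fun n => ?_⟩
  have hmax : (l (max n n₀)).length ≤ (l n₀).length := by
    rw [show (l n₀).length = _ from hn₀]
    exact le_csSup hbdd ⟨_, rfl⟩
  have hle : l n₀ <+: l (max n n₀) := hl (le_max_right n n₀)
  rw [hle.eq_of_length (le_antisymm hle.length_le hmax)]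
  exact hl (le_max_left n n₀)

theorem PiNat.exists_cylinder_subset {E : ℕ → Type*} [∀ n, TopologicalSpace (E n)]
    [∀ n, DiscreteTopology (E n)] {U : Set (∀ n, E n)} (hU : IsOpen U) {x : ∀ n, E n}
    (hx : x ∈ U) : ∃ n, cylinder x n ⊆ U := by
  obtain ⟨_, ⟨y, n, rfl⟩, hxy, hsub⟩ :=
    (isTopologicalBasis_cylinders E).exists_subset_of_mem_open hx hU
  exact ⟨n, mem_cylinder_iff_eq.1 hxy ▸ hsub⟩

theorem PiNat.continuous_of_forall_mem_cylinder {E F : ℕ → Type*}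
    [∀ n, TopologicalSpace (E n)] [∀ n, DiscreteTopology (E n)] [∀ n, TopologicalSpace (F n)]
    {f : (∀ n, E n) → ∀ n, F n}
    (h : ∀ x n, ∃ m, ∀ y ∈ cylinder x m, f y n = f x n) : Continuous f :=
  continuous_pi fun n => IsLocallyConstant.continuous <|
    (IsLocallyConstant.iff_exists_open _).2 fun x =>
      let ⟨m, hm⟩ := h x n
      ⟨cylinder x m, isOpen_cylinder _ x m, self_mem_cylinder x m, hm⟩

namespace WadgeStudy

theorem ofList_get? (σ : List ℕ) (k : ℕ) : (ofList σ).get? k = σ[k]? :=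
  Stream'.Seq.ofList_get? σ k

theorem ofList_append (σ τ : List ℕ) : ofList (σ ++ τ) = (ofList σ).append (ofList τ) :=
  Stream'.Seq.ofList_append σ τ

section HeadTail

variable {X : HatBaire}

theorem nthSome_succ_eq_map_succ {k k' : ℕ}
    (h : nthSome X k' = (nthSome (fun n => X (n + 1)) k).map Nat.succ) :
    nthSome X (k' + 1) = (nthSome (fun n => X (n + 1)) (k + 1)).map Nat.succ := by
  rcases hk : nthSome (fun n => X (n + 1)) k with _ | i
  · simp [nthSome, h, hk]
  · simp only [nthSome, h, hk, Option.map_some]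
    rw [Nat.dite_find_eq_map_succ (by simp)]
    simp only [Nat.succ_lt_succ_iff]

theorem nthSome_eq_map_succ_of_head_none (h : X 0 = none) :
    ∀ k, nthSome X k = (nthSome (fun n => X (n + 1)) k).map Nat.succ
  | 0 => Nat.dite_find_eq_map_succ (by simp [h])
  | k + 1 => nthSome_succ_eq_map_succ (nthSome_eq_map_succ_of_head_none h k)

theorem nthSome_zero_of_head_some {a : ℕ} (h : X 0 = some a) : nthSome X 0 = some 0 := by
  have hex : ∃ i, (X i).isSome := ⟨0, by simp [h]⟩
  simp only [nthSome, dif_pos hex, Option.some_inj, Nat.find_eq_zero, h, Option.isSome_some]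

theorem nthSome_succ_eq_map_succ_of_head_some {a : ℕ} (h : X 0 = some a) :
    ∀ k, nthSome X (k + 1) = (nthSome (fun n => X (n + 1)) k).map Nat.succ
  | 0 => by
    rw [nthSome.eq_2, nthSome_zero_of_head_some h, nthSome.eq_1]
    dsimp only
    rw [Nat.dite_find_eq_map_succ (by simp)]
    simp only [Nat.zero_lt_succ, true_and]
  | k + 1 => nthSome_succ_eq_map_succ (nthSome_succ_eq_map_succ_of_head_some h k)

theorem strip_of_head_none (h : X 0 = none) : strip X = strip (fun n => X (n + 1)) := by
  refine Stream'.Seq.ext fun k => ?_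
  change (nthSome X k).bind X = (nthSome _ k).bind _
  rw [nthSome_eq_map_succ_of_head_none h, Option.bind_map]
  rfl

theorem strip_of_head_some {a : ℕ} (h : X 0 = some a) :
    strip X = Stream'.Seq.cons a (strip (fun n => X (n + 1))) := by
  refine Stream'.Seq.ext fun k => ?_
  cases k with
  | zero =>
    change (nthSome X 0).bind X = _
    rw [nthSome_zero_of_head_some h, Stream'.Seq.get?_cons_zero, Option.bind_some, h]
  | succ k =>
    change (nthSome X (k + 1)).bind X = _
    rw [nthSome_succ_eq_map_succ_of_head_some h, Option.bind_map, Stream'.Seq.get?_cons_succ]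
    rfl

end HeadTail

theorem strip_eq_nil {X : HatBaire} (h : ∀ n, X n = none) : strip X = Stream'.Seq.nil := by
  have hnth : ∀ k, nthSome X k = none := by
    intro k
    induction k with
    | zero => simp [nthSome, h]
    | succ k ih => exact nthSome_succ_none ih
  refine Stream'.Seq.ext fun k => ?_
  change (nthSome X k).bind X = none
  rw [hnth, Option.bind_none]

theorem strip_eq_append_head (X : HatBaire) :
    strip X = (ofList (X 0).toList).append (strip fun n => X (n + 1)) := by
  cases h : X 0 with
  | none => rw [strip_of_head_none h]; exact (Stream'.Seq.nil_append _).symm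
  | some a =>
    rw [strip_of_head_some h, Option.toList_some, ofList, Stream'.Seq.ofList_cons,
      Stream'.Seq.cons_append, Stream'.Seq.ofList_nil, Stream'.Seq.nil_append]

def stripInit (X : HatBaire) (n : ℕ) : List ℕ := (List.ofFn fun i : Fin n => X i).reduceOption

theorem stripInit_succ (X : HatBaire) (n : ℕ) :
    stripInit X (n + 1) = stripInit X n ++ (X n).toList := by
  rw [stripInit, List.ofFn_succ', List.reduceOption_concat]
  rfl

theorem stripInit_succ' (X : HatBaire) (n : ℕ) :
    stripInit X (n + 1) = (X 0).toList ++ stripInit (fun m => X (m + 1)) n := by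
  rw [stripInit, List.ofFn_succ]
  cases h : X 0 <;> simp [h, stripInit]

theorem stripInit_prefix (X : HatBaire) {m n : ℕ} (h : m ≤ n) :
    stripInit X m <+: stripInit X n := by
  induction h with
  | refl => exact List.prefix_refl _
  | step _ ih => exact ih.trans (stripInit_succ X _ ▸ List.prefix_append _ _)

theorem stripInit_congr {X Y : HatBaire} {n : ℕ} (h : Y ∈ cylinder X n) :
    stripInit Y n = stripInit X n := by
  simp only [stripInit, List.ofFn_inj.2 (funext fun i : Fin n => h i i.2)]

theorem strip_eq_append (X : HatBaire) (N : ℕ) :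
    strip X = (ofList (stripInit X N)).append (strip fun n => X (n + N)) := by
  induction N generalizing X with
  | zero => exact (Stream'.Seq.nil_append _).symm
  | succ N ih =>
    rw [strip_eq_append_head, ih, stripInit_succ', ofList_append, Stream'.Seq.append_assoc]
    rfl

theorem getElem?_stripInit_of_nthSome {a : ℕ} :
    ∀ {i k : ℕ} {X : HatBaire}, nthSome X k = some i → X i = some a →
      (stripInit X (i + 1))[k]? = some a := by
  intro i
  induction i with
  | zero =>
    rintro (_ | k) X hk hX
    · simp [hX, stripInit]
    · simp [nthSome_succ_eq_map_succ_of_head_some hX] at hk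
  | succ i ih =>
    intro k X hk hX
    rw [stripInit_succ']
    cases h0 : X 0 with
    | none =>
      rw [nthSome_eq_map_succ_of_head_none h0, Option.map_eq_some_iff] at hk
      obtain ⟨_, hk, hi⟩ := hk
      cases Nat.succ_injective hi
      exact ih hk hX
    | some b =>
      cases k with
      | zero => simp [nthSome_zero_of_head_some h0] at hk
      | succ k =>
        rw [nthSome_succ_eq_map_succ_of_head_some h0, Option.map_eq_some_iff] at hk
        obtain ⟨_, hk, hi⟩ := hk
        cases Nat.succ_injective hi
        exact ih hk hX

def IsUnion (s : ℕ → Stream'.Seq ℕ) (t : Stream'.Seq ℕ) : Prop :=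
  ∀ k a, t.get? k = some a ↔ ∃ n, (s n).get? k = some a

theorem IsUnion.unique {s : ℕ → Stream'.Seq ℕ} {t t' : Stream'.Seq ℕ} (h : IsUnion s t)
    (h' : IsUnion s t') : t = t' :=
  Stream'.Seq.ext fun k => Option.ext fun a => (h k a).trans (h' k a).symm

theorem isUnion_strip (X : HatBaire) : IsUnion (fun n => ofList (stripInit X n)) (strip X) := by
  intro k a
  simp only [ofList_get?]
  constructor
  · intro h
    obtain ⟨i, hi, hXi⟩ := Option.bind_eq_some_iff.1 h
    exact ⟨i + 1, getElem?_stripInit_of_nthSome hi hXi⟩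
  · rintro ⟨n, h⟩
    rw [strip_eq_append X n]
    exact (Stream'.Seq.get?_append_ofList ((List.getElem?_eq_some_iff.1 h).1)).trans h

theorem isOpen_setOf_strip_get?_eq_some (k a : ℕ) :
    IsOpen {Z : HatBaire | (strip Z).get? k = some a} := by
  refine isOpen_iff_forall_mem_open.2 fun Z hZ => ?_
  obtain ⟨n, hn⟩ := (isUnion_strip Z k a).1 hZ
  refine ⟨cylinder Z n, fun Y hY => (isUnion_strip Y k a).2 ⟨n, ?_⟩, isOpen_cylinder _ Z n,
    self_mem_cylinder Z n⟩
  change (ofList (stripInit Y n)).get? k = some a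
  rwa [stripInit_congr hY]

def initAppend (X : HatBaire) (N : ℕ) (W : HatBaire) : HatBaire := fun n =>
  if n < N then X n else W (n - N)

theorem initAppend_mem_cylinder (X : HatBaire) (N : ℕ) (W : HatBaire) :
    initAppend X N W ∈ cylinder X N :=
  fun _ hi => if_pos hi

theorem strip_initAppend (X : HatBaire) (N : ℕ) (W : HatBaire) :
    strip (initAppend X N W) = (ofList (stripInit X N)).append (strip W) := by
  rw [strip_eq_append _ N, stripInit_congr (initAppend_mem_cylinder X N W)]
  congr
  funext n
  simp [initAppend]

def padPass (σ : List ℕ) : HatBaire := fun n => σ[n]?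

theorem stripInit_padPass (σ : List ℕ) (N : ℕ) : stripInit (padPass σ) N = σ.take N := by
  induction σ generalizing N with
  | nil => simp [stripInit, padPass, List.ofFn_const, List.reduceOption_replicate_none]
  | cons x σ ih =>
    cases N with
    | zero => rfl
    | succ N => rw [stripInit_succ', List.take_succ_cons, ← ih N]; rfl

theorem strip_padPass (σ : List ℕ) : strip (padPass σ) = ofList σ := by
  rw [strip_eq_append _ σ.length, stripInit_padPass, List.take_length,
    strip_eq_nil fun n => by simp [padPass], Stream'.Seq.append_nil]

theorem strip_some (X : Baire) : strip (fun n => some (X n)) = ofBaire X := by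
  suffices h : ∀ k (X : Baire), (strip fun n => some (X n)).get? k = some (X k) from
    Stream'.Seq.ext fun k => h k X
  intro k
  induction k with
  | zero => intro X; rw [strip_of_head_some (X := fun n => some (X n)) rfl]; rfl
  | succ k ih =>
    intro X
    rw [strip_of_head_some (X := fun n => some (X n)) rfl, Stream'.Seq.get?_cons_succ, ih]

theorem stripInit_some (X : Baire) (n : ℕ) :
    stripInit (fun n => some (X n)) n = initSeg X n := by
  have h : (List.ofFn fun i : Fin n => some (X i)) = (initSeg X n).map some :=
    (List.map_ofFn ..).symm
  simp [stripInit, h, List.reduceOption]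

theorem ofList_initSeg_append (X : Baire) (n : ℕ) :
    (ofList (initSeg X n)).append (ofBaire fun m => X (m + n)) = ofBaire X := by
  have h := strip_eq_append (fun m => some (X m)) n
  simp only [strip_some, stripInit_some] at h
  exact h.symm

theorem exists_initAppend_mem {U : Set HatBaire} (hU : IsOpen U) {X : HatBaire} (hX : X ∈ U)
    (N₀ : ℕ) : ∃ N ≥ N₀, ∀ W, initAppend X N W ∈ U := by
  obtain ⟨N, hN⟩ := exists_cylinder_subset hU hX
  exact ⟨max N N₀, le_max_right _ _, fun W =>
    hN (cylinder_anti X (le_max_left _ _) (initAppend_mem_cylinder X _ W))⟩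

theorem seqPrefix_of_isOpen {G : Stream'.Seq ℕ → Stream'.Seq ℕ}
    (hG : ∀ k a, IsOpen {Y : HatBaire | (G (strip Y)).get? k = some a}) {σ τ : List ℕ}
    (h : σ <+: τ) : SeqPrefix (G (ofList σ)) (G (ofList τ)) := by
  obtain ⟨ρ, rfl⟩ := h
  intro k a hk
  obtain ⟨N, hN, hmem⟩ := exists_initAppend_mem (hG k a) (X := padPass σ)
    (by rwa [Set.mem_ofPred_eq, strip_padPass]) σ.length
  have h := hmem (padPass ρ)
  rwa [Set.mem_ofPred_eq, strip_initAppend, stripInit_padPass, List.take_of_length_le hN,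
    strip_padPass, ← ofList_append] at h

theorem isUnion_initSeg_of_isOpen {G : Stream'.Seq ℕ → Stream'.Seq ℕ}
    (hG : ∀ k a, IsOpen {Y : HatBaire | (G (strip Y)).get? k = some a}) (X : Baire) :
    IsUnion (fun n => G (ofList (initSeg X n))) (G (ofBaire X)) := by
  intro k a
  constructor
  · intro hk
    obtain ⟨N, -, hmem⟩ := exists_initAppend_mem (hG k a) (X := fun n => some (X n))
      (by rwa [Set.mem_ofPred_eq, strip_some]) 0
    have h := hmem fun _ => none
    rw [Set.mem_ofPred_eq, strip_initAppend, stripInit_some, strip_eq_nil fun _ => rfl,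
      Stream'.Seq.append_nil] at h
    exact ⟨N, h⟩
  · rintro ⟨n, hn⟩
    obtain ⟨N, hN, hmem⟩ := exists_initAppend_mem (hG k a) (X := padPass (initSeg X n))
      (by rwa [Set.mem_ofPred_eq, strip_padPass]) n
    have h := hmem fun m => some (X (m + n))
    rwa [Set.mem_ofPred_eq, strip_initAppend, stripInit_padPass,
      List.take_of_length_le (by simpa [initSeg] using hN), strip_some,
      ofList_initSeg_append] at h

theorem isOpen_setOf_get?_apply_strip {G : Stream'.Seq ℕ → Stream'.Seq ℕ}
    {Ψ : HatBaire → HatBaire} (hΨ : Continuous Ψ) (hG : ∀ X, strip (Ψ X) = G (strip X))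
    (k a : ℕ) : IsOpen {Y : HatBaire | (G (strip Y)).get? k = some a} := by
  simpa only [Set.preimage_ofPred_eq, hG] using (isOpen_setOf_strip_get?_eq_some k a).preimage hΨ

theorem getElem?_initSeg (X : Baire) {n k : ℕ} :
    (initSeg X n)[k]? = if k < n then some (X k) else none := by
  simp [initSeg, List.getElem?_ofFn]

theorem initSeg_prefix (X : Baire) {m n : ℕ} (h : m ≤ n) : initSeg X m <+: initSeg X n := by
  simpa only [stripInit_some] using stripInit_prefix (fun n => some (X n)) h

section Sufficiency

variable {G : Stream'.Seq ℕ → Stream'.Seq ℕ}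

theorem isUnion_apply_of_infinite
    (hmono : ∀ σ τ : List ℕ, σ <+: τ → SeqPrefix (G (ofList σ)) (G (ofList τ)))
    (hlim : ∀ X : Baire, IsUnion (fun n => G (ofList (initSeg X n))) (G (ofBaire X)))
    {l : ℕ → List ℕ} {t : Stream'.Seq ℕ} (ht : IsUnion (fun n => ofList (l n)) t)
    (htot : ∀ k, ∃ a, t.get? k = some a) :
    IsUnion (fun n => G (ofList (l n))) (G t) := by
  choose Y hY using htot
  obtain rfl : t = ofBaire Y := Stream'.Seq.ext fun k => hY k
  have hlY : ∀ n, l n = initSeg Y (l n).length := fun n => List.ext_getElem? fun k => by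
    rw [getElem?_initSeg]
    split_ifs with hk
    · obtain ⟨b, hb⟩ : ∃ b, (l n)[k]? = some b := ⟨_, List.getElem?_eq_getElem hk⟩
      have := (ht k b).2 ⟨n, by rwa [ofList_get?]⟩
      rw [hb, ← Option.some_inj.1 ((hY k).symm.trans this)]
    · exact List.getElem?_eq_none (not_lt.1 hk)
  have hcof : ∀ m, ∃ n, m ≤ (l n).length := fun m => by
    obtain ⟨n, hn⟩ := (ht m (Y m)).1 (hY m)
    rw [ofList_get?] at hn
    exact ⟨n, (List.getElem?_eq_some_iff.1 hn).1.le⟩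
  intro k a
  rw [hlim Y k a]
  constructor
  · rintro ⟨m, hm⟩
    obtain ⟨n, hn⟩ := hcof m
    refine ⟨n, hmono _ _ ?_ k a hm⟩
    rw [hlY n]
    exact initSeg_prefix Y hn
  · rintro ⟨n, hn⟩
    refine ⟨(l n).length, ?_⟩
    change (G (ofList (initSeg Y (l n).length))).get? k = some a
    rwa [← hlY n]

theorem isUnion_apply_of_get?_eq_none
    (hmono : ∀ σ τ : List ℕ, σ <+: τ → SeqPrefix (G (ofList σ)) (G (ofList τ)))
    {l : ℕ → List ℕ} (hl : ∀ {m n}, m ≤ n → l m <+: l n) {t : Stream'.Seq ℕ}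
    (ht : IsUnion (fun n => ofList (l n)) t) {m : ℕ} (hm : t.get? m = none) :
    IsUnion (fun n => G (ofList (l n))) (G t) := by
  have hlen : ∀ n, (l n).length ≤ m := fun n => by
    by_contra! h
    have := (ht m _).2 ⟨n, (ofList_get? _ _).trans (List.getElem?_eq_getElem h)⟩
    rw [hm] at this
    cases this
  obtain ⟨n₀, hn₀⟩ := List.exists_forall_prefix_of_length_le hl hlen
  have htl : IsUnion (fun n => ofList (l n)) (ofList (l n₀)) := fun k a =>
    ⟨fun h => ⟨n₀, h⟩, fun ⟨n, h⟩ => by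
      rw [ofList_get?] at h ⊢
      exact (hn₀ n).getElem?_eq_some h⟩
  obtain rfl := htl.unique ht
  exact fun k a => ⟨fun h => ⟨n₀, h⟩, fun ⟨n, h⟩ => hmono _ _ (hn₀ n) k a h⟩

theorem isUnion_apply
    (hmono : ∀ σ τ : List ℕ, σ <+: τ → SeqPrefix (G (ofList σ)) (G (ofList τ)))
    (hlim : ∀ X : Baire, IsUnion (fun n => G (ofList (initSeg X n))) (G (ofBaire X)))
    {l : ℕ → List ℕ} (hl : ∀ {m n}, m ≤ n → l m <+: l n) {t : Stream'.Seq ℕ}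
    (ht : IsUnion (fun n => ofList (l n)) t) :
    IsUnion (fun n => G (ofList (l n))) (G t) := by
  by_cases hfin : ∃ m, t.get? m = none
  · obtain ⟨m, hm⟩ := hfin
    exact isUnion_apply_of_get?_eq_none hmono hl ht hm
  · exact isUnion_apply_of_infinite hmono hlim ht fun k =>
      Option.ne_none_iff_exists'.1 fun hk => hfin ⟨k, hk⟩

end Sufficiency

def emitted (s : ℕ → Stream'.Seq ℕ) : ℕ → List ℕ
  | 0 => []
  | n + 1 => emitted s n ++ ((s (n + 1)).get? (emitted s n).length).toList

def emit (s : ℕ → Stream'.Seq ℕ) : HatBaire := fun n => (s (n + 1)).get? (emitted s n).length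

theorem stripInit_emit (s : ℕ → Stream'.Seq ℕ) : ∀ n, stripInit (emit s) n = emitted s n
  | 0 => rfl
  | n + 1 => by rw [stripInit_succ, stripInit_emit s n]; rfl

section Emission

variable {s : ℕ → Stream'.Seq ℕ}

theorem emitted_congr {s' : ℕ → Stream'.Seq ℕ} :
    ∀ {n}, (∀ m ≤ n, s m = s' m) → emitted s n = emitted s' n
  | 0, _ => rfl
  | n + 1, h => by
    rw [emitted, emitted, emitted_congr (n := n) fun m hm => h m (by omega), h (n + 1) le_rfl]

theorem emit_congr {s' : ℕ → Stream'.Seq ℕ} {n : ℕ} (h : ∀ m ≤ n + 1, s m = s' m) :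
    emit s n = emit s' n := by
  rw [emit, emit, emitted_congr (n := n) fun m hm => h m (by omega), h (n + 1) le_rfl]

theorem seqPrefix_of_le (hs : ∀ n, SeqPrefix (s n) (s (n + 1))) {m n : ℕ} (h : m ≤ n) :
    SeqPrefix (s m) (s n) := by
  induction h with
  | refl => exact fun _ _ => id
  | step _ ih => exact fun k a hk => hs _ k a (ih k a hk)

theorem seqPrefix_emitted (hs : ∀ n, SeqPrefix (s n) (s (n + 1))) :
    ∀ n, SeqPrefix (ofList (emitted s n)) (s n)
  | 0 => fun k a h => by simp [ofList_get?, emitted] at h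
  | n + 1 => fun k a h => by
    rw [ofList_get?, emitted] at h
    rcases lt_or_ge k (emitted s n).length with hk | hk
    · rw [List.getElem?_append_left hk] at h
      exact hs n k a (seqPrefix_emitted hs n k a ((ofList_get? _ _).trans h))
    · rw [List.getElem?_append_right hk] at h
      cases hget : (s (n + 1)).get? (emitted s n).length with
      | none => simp [hget] at h
      | some b =>
        rw [hget] at h
        obtain ⟨hkL, rfl⟩ : k - (emitted s n).length = 0 ∧ b = a := by
          generalize k - (emitted s n).length = i at h
          cases i <;> simp_all
        rwa [show k = (emitted s n).length by omega]

theorem exists_lt_length_emitted (hs : ∀ n, SeqPrefix (s n) (s (n + 1))) {n₀ k a : ℕ}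
    (h : (s n₀).get? k = some a) : ∃ n, k < (emitted s n).length := by
  by_contra! hlt
  have hstep : ∀ n ≥ n₀, (emitted s (n + 1)).length = (emitted s n).length + 1 := by
    intro n hn
    obtain ⟨b, hb⟩ :=
      (s (n + 1)).ge_stable (hlt n) (seqPrefix_of_le hs (by omega : n₀ ≤ n + 1) k a h)
    simp [emitted, hb]
  have hgrow : ∀ j, j ≤ (emitted s (n₀ + j)).length := by
    intro j
    induction j with
    | zero => exact Nat.zero_le _
    | succ j ih => rw [← Nat.add_assoc, hstep _ (by omega)]; omega
  have := hgrow (k + 1)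
  have := hlt (n₀ + (k + 1))
  omega

theorem isUnion_emitted (hs : ∀ n, SeqPrefix (s n) (s (n + 1))) {t : Stream'.Seq ℕ}
    (ht : IsUnion s t) : IsUnion (fun n => ofList (emitted s n)) t := by
  intro k a
  have sound : ∀ n b, (ofList (emitted s n)).get? k = some b → t.get? k = some b :=
    fun n b h => (ht k b).2 ⟨n, seqPrefix_emitted hs n k b h⟩
  refine ⟨fun h => ?_, fun ⟨n, h⟩ => sound n a h⟩
  obtain ⟨n₀, h₀⟩ := (ht k a).1 h
  obtain ⟨n, hn⟩ := exists_lt_length_emitted hs h₀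
  have hb := (ofList_get? _ _).trans (List.getElem?_eq_getElem hn)
  obtain rfl := Option.some_inj.1 ((sound n _ hb).symm.trans h)
  exact ⟨n, hb⟩

theorem strip_emit (hs : ∀ n, SeqPrefix (s n) (s (n + 1))) {t : Stream'.Seq ℕ}
    (ht : IsUnion s t) : strip (emit s) = t := by
  have h := isUnion_strip (emit s)
  simp only [stripInit_emit] at h
  exact h.unique (isUnion_emitted hs ht)

end Emission

def hatLift (G : Stream'.Seq ℕ → Stream'.Seq ℕ) (X : HatBaire) : HatBaire :=
  emit fun n => G (ofList (stripInit X n))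

theorem continuous_hatLift (G : Stream'.Seq ℕ → Stream'.Seq ℕ) : Continuous (hatLift G) :=
  continuous_of_forall_mem_cylinder fun X n => ⟨n + 1, fun _ hY => emit_congr fun _ hm => by
    rw [stripInit_congr (cylinder_anti X hm hY)]⟩

theorem strip_hatLift {G : Stream'.Seq ℕ → Stream'.Seq ℕ}
    (hmono : ∀ σ τ : List ℕ, σ <+: τ → SeqPrefix (G (ofList σ)) (G (ofList τ)))
    (hlim : ∀ X : Baire, IsUnion (fun n => G (ofList (initSeg X n))) (G (ofBaire X)))
    (X : HatBaire) : strip (hatLift G X) = G (strip X) :=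
  strip_emit (fun n => hmono _ _ (stripInit_prefix X n.le_succ))
    (isUnion_apply hmono hlim (stripInit_prefix X) (isUnion_strip X))

/-- A function `G : ω^{≤ω} → ω^{≤ω}` can be represented as a continuous
conciliatory function (i.e. there is a continuous conciliatory `Ĝ : ω̂^ω → ω̂^ω` with
`Ĝ(X)^p = G(X^p)` for all `X`) iff: (i) `σ ⊆ τ` implies `G(σ) ⊆ G(τ)` for finite strings
`σ, τ`, and (ii) `G(X) = ⋃_n G(X↾n)` for every `X ∈ ω^ω`. -/
theorem continuous_conciliatory_representation (G : Stream'.Seq ℕ → Stream'.Seq ℕ) :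
    (∃ Ghat : HatBaire → HatBaire, Continuous Ghat ∧ ConciliatoryF Ghat ∧
        ∀ X, strip (Ghat X) = G (strip X)) ↔
      ((∀ σ τ : List ℕ, σ <+: τ → SeqPrefix (G (ofList σ)) (G (ofList τ))) ∧
       ∀ X : Baire, ∀ k a,
          (G (ofBaire X)).get? k = some a ↔ ∃ n, (G (ofList (initSeg X n))).get? k = some a) := by
  constructor
  · rintro ⟨Ghat, hcont, -, hGhat⟩
    have hG := isOpen_setOf_get?_apply_strip hcont hGhat
    exact ⟨fun _ _ => seqPrefix_of_isOpen hG, isUnion_initSeg_of_isOpen hG⟩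
  · rintro ⟨hmono, hlim⟩
    have hstrip := strip_hatLift hmono hlim
    exact ⟨hatLift G, continuous_hatLift G, fun X Y h => by rw [hstrip, hstrip, h], hstrip⟩

end WadgeStudy
end
end
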